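/- arXiv:1902.00080 — 2 statements merged into one kernel-verified Lean document; each statement's English description precedes it below -/
import Mathlib

section
/- Let d = 6k with k ≥ 2, let 0 < ε ≤ 1/8 and 0 < η < 1/48. Fix i⋆ ∈ [d/3], let M̄ = M_{η,0} (all τ_i = 0) and M = M_{η,τ} with τ_i = 1{i = i⋆}, and let μ be the uniform distribution on the inner clique states {1,…,d/3}. Then max_{i∈[d]} ∑_{j∈[d]} |M(i,j) − M̄(i,j)| = ε, and for every m ≤ d/(120η) and every randomized test T : [d]^m → [0,1] (T(x) being the probability of outputting 1 on input x), E_{M̄,μ}[T(X₁,…,X_m)] + E_{M,μ}[1 − T(X₁,…,X_m)] ≥ 1/10. -/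
/-!
The two chains differ only in the rows of the three states attached to the inner state `i⋆`
(`i⋆` itself and its two outer neighbours), and in each of these rows by exactly `ε` in `ℓ¹`.
A trajectory that never visits these states therefore has the same probability under both
chains, so the two error probabilities of any test add up to at least the mass of such
trajectories under `M̄`. Under `M̄` started from the uniform law on the clique, the first state
is one of them with probability `3/d ≤ 1/2`, and every later step enters them with probability
at most `η/(d/3 - 1)`, so trajectories of length `m ≤ d/(120η)` avoid them with probability at
least `1 - 1/2 - 1/20`.
-/

open Finset

noncomputable section

/-- A row-stochastic matrix. -/
def IsStochastic {d : ℕ} (M : Matrix (Fin d) (Fin d) ℝ) : Prop :=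
  (∀ i j, 0 ≤ M i j) ∧ ∀ i, ∑ j, M i j = 1

/-- A probability distribution on `Fin d`. -/
def IsDist {d : ℕ} (μ : Fin d → ℝ) : Prop :=
  (∀ i, 0 ≤ μ i) ∧ ∑ i, μ i = 1

/-- Probability of a length-`m` trajectory under the Markov chain `(M, μ)`:
`μ(x₁) ∏_{t=1}^{m-1} M(x_t, x_{t+1})`. -/
def trajP {d m : ℕ} (M : Matrix (Fin d) (Fin d) ℝ) (μ : Fin d → ℝ)
    (x : Fin m → Fin d) : ℝ :=
  (if h : 0 < m then μ (x ⟨0, h⟩) else 1) *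
    ∏ t : Fin (m - 1),
      M (x ⟨t.1, by have h2 := t.2; omega⟩) (x ⟨t.1 + 1, by have h2 := t.2; omega⟩)

/-- The block chain `M_{η,τ}` on `d = 6k` states: inner clique `C_η` on states
`1,…,d/3`, connector blocks `R_τ`, `R_τᵀ`, and diagonal outer block `L_τ`. -/
def Mblock (k : ℕ) (ε η : ℝ) (τ : Fin (2 * k) → ℝ) :
    Matrix (Fin (6 * k)) (Fin (6 * k)) ℝ :=
  Matrix.of fun i j =>
    if hi : i.1 < 2 * k then
      if j.1 < 2 * k then
        (if i.1 = j.1 then 3 / 4 - η else η / (2 * (k : ℝ) - 1))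
      else
        (if j.1 = 2 * k + 2 * i.1 then (1 + 4 * τ ⟨i.1, hi⟩ * ε) / 8
         else if j.1 = 2 * k + 2 * i.1 + 1 then (1 - 4 * τ ⟨i.1, hi⟩ * ε) / 8
         else 0)
    else
      if hj : j.1 < 2 * k then
        (if i.1 = 2 * k + 2 * j.1 then (1 + 4 * τ ⟨j.1, hj⟩ * ε) / 8
         else if i.1 = 2 * k + 2 * j.1 + 1 then (1 - 4 * τ ⟨j.1, hj⟩ * ε) / 8
         else 0)
      else
        (if i.1 = j.1 then
           (if (i.1 - 2 * k) % 2 = 0 then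
              (7 - 4 * τ ⟨(i.1 - 2 * k) / 2, by have h2 := i.2; omega⟩ * ε) / 8
            else
              (7 + 4 * τ ⟨(i.1 - 2 * k) / 2, by have h2 := i.2; omega⟩ * ε) / 8)
         else 0)

theorem Fin.sum_univ_pi_snoc {α M : Type*} [Fintype α] [AddCommMonoid M] {n : ℕ}
    (f : (Fin (n + 1) → α) → M) :
    ∑ x, f x = ∑ x : Fin n → α, ∑ y, f (Fin.snoc x y) := by
  rw [← (Fin.snocEquiv fun _ => α).sum_comp, Fintype.sum_prod_type, Finset.sum_comm]
  rfl

theorem Fin.sum_filter_forall_pi_snoc {α M : Type*} [Fintype α] [AddCommMonoid M] {n : ℕ}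
    (p : α → Prop) [DecidablePred p] (f : (Fin (n + 1) → α) → M) :
    ∑ x with ∀ t, p (x t), f x =
      ∑ x : Fin n → α with ∀ t, p (x t), ∑ y with p y, f (Fin.snoc x y) := by
  simp only [sum_filter, Fin.sum_univ_pi_snoc, Fin.forall_fin_succ', Fin.snoc_castSucc,
    Fin.snoc_last, ite_and, ite_sum_zero]

theorem Fin.sum_ite_val_eq {n c : ℕ} (hc : c < n) (v : ℝ) :
    ∑ j : Fin n, (if j.1 = c then v else 0) = v := by
  rw [Fin.sum_univ_eq_sum_range (fun t => if t = c then v else 0), sum_ite_eq',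
    if_pos (mem_range.2 hc)]

theorem Fin.sum_ite_val_lt {n c : ℕ} (hc : c ≤ n) (v : ℝ) :
    ∑ j : Fin n, (if j.1 < c then v else 0) = c * v := by
  have hfilter : (range n).filter (· < c) = range c := by
    ext t; simp only [mem_filter, mem_range]; omega
  rw [Fin.sum_univ_eq_sum_range (fun t => if t < c then v else 0), ← sum_filter, hfilter,
    Finset.sum_const, card_range, nsmul_eq_mul]

theorem sum_le_sum_mul_add_sum_mul_one_sub {α : Type*} [Fintype α] {P Q T : α → ℝ}
    (hP : ∀ x, 0 ≤ P x) (hQ : ∀ x, 0 ≤ Q x) (hT : ∀ x, 0 ≤ T x ∧ T x ≤ 1) {S : Finset α}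
    (hPQ : ∀ x ∈ S, P x = Q x) :
    ∑ x ∈ S, P x ≤ ∑ x, P x * T x + ∑ x, Q x * (1 - T x) := by
  calc ∑ x ∈ S, P x = ∑ x ∈ S, P x * T x + ∑ x ∈ S, Q x * (1 - T x) := by
        rw [← sum_add_distrib]
        exact sum_congr rfl fun x hx => by rw [hPQ x hx]; ring
    _ ≤ _ := add_le_add
        (sum_le_univ_sum_of_nonneg fun x => mul_nonneg (hP x) (hT x).1)
        (sum_le_univ_sum_of_nonneg fun x => mul_nonneg (hQ x) (sub_nonneg.2 (hT x).2))

section MarkovChain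

variable {d : ℕ} {M M' : Matrix (Fin d) (Fin d) ℝ} {μ : Fin d → ℝ}

theorem trajP_zero (x : Fin 0 → Fin d) : trajP M μ x = 1 := by
  simp [trajP]

theorem trajP_one (x : Fin 1 → Fin d) : trajP M μ x = μ (x 0) := by
  simp [trajP]

theorem trajP_succ {m : ℕ} (x : Fin (m + 1) → Fin d) :
    trajP M μ x = μ (x 0) * ∏ t : Fin m, M (x t.castSucc) (x t.succ) := by
  simp only [trajP, dif_pos m.succ_pos]
  rfl

theorem trajP_snoc {m : ℕ} (x : Fin (m + 1) → Fin d) (y : Fin d) :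
    trajP M μ (Fin.snoc x y) = trajP M μ x * M (x (Fin.last m)) y := by
  rw [trajP_succ, trajP_succ, Fin.prod_univ_castSucc, mul_assoc]
  simp only [Fin.succ_castSucc, Fin.snoc_castSucc, Fin.snoc_last, Fin.succ_last]
  rfl

theorem trajP_nonneg (hM : ∀ i j, 0 ≤ M i j) (hμ : ∀ i, 0 ≤ μ i) {m : ℕ}
    (x : Fin m → Fin d) : 0 ≤ trajP M μ x := by
  unfold trajP
  split_ifs
  · exact mul_nonneg (hμ _) (prod_nonneg fun _ _ => hM _ _)
  · exact mul_nonneg zero_le_one (prod_nonneg fun _ _ => hM _ _)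

theorem trajP_congr_rows {m : ℕ} {x : Fin m → Fin d} (h : ∀ t, M (x t) = M' (x t)) :
    trajP M μ x = trajP M' μ x := by
  simp only [trajP, h]

theorem sum_trajP (hM : ∀ i, ∑ j, M i j = 1) (hμ : ∑ i, μ i = 1) :
    ∀ m, ∑ x : Fin m → Fin d, trajP M μ x = 1
  | 0 => by simp [trajP_zero]
  | 1 => by
    rw [← hμ, ← (Equiv.funUnique (Fin 1) (Fin d)).symm.sum_comp]
    simp [trajP_one]
  | m + 2 => by
    rw [Fin.sum_univ_pi_snoc, ← sum_trajP hM hμ (m + 1)]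
    simp only [trajP_snoc, ← mul_sum, hM, mul_one]

theorem one_sub_le_sum_trajP_avoid (hM : IsStochastic M) (hμ : IsDist μ) {B : Finset (Fin d)}
    {c : ℝ} (hc0 : 0 ≤ c) (hc : ∀ i ∉ B, ∑ j ∈ B, M i j ≤ c) :
    ∀ m : ℕ, 1 - ∑ i ∈ B, μ i - m * c ≤ ∑ x : Fin m → Fin d with ∀ t, x t ∉ B, trajP M μ x
  | 0 => by
    have hB : 0 ≤ ∑ i ∈ B, μ i := sum_nonneg fun i _ => hμ.1 i
    calc 1 - ∑ i ∈ B, μ i - (0 : ℕ) * c ≤ 1 := by push_cast; linarith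
      _ = _ := by simp [trajP_zero]
  | 1 => by
    have hsplit := sum_filter_add_sum_filter_not univ (· ∈ B) μ
    rw [hμ.2, filter_mem_eq_inter, univ_inter] at hsplit
    have hstart :
        ∑ x : Fin 1 → Fin d with ∀ t, x t ∉ B, trajP M μ x = ∑ i with i ∉ B, μ i := by
      rw [sum_filter, ← (Equiv.funUnique (Fin 1) (Fin d)).symm.sum_comp, ← sum_filter]
      simp [trajP_one]
    rw [hstart]
    push_cast
    linarith
  | m + 2 => by
    have ih := one_sub_le_sum_trajP_avoid hM hμ hc0 hc (m + 1)
    have hA1 : ∑ x : Fin (m + 1) → Fin d with ∀ t, x t ∉ B, trajP M μ x ≤ 1 :=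
      (sum_le_univ_sum_of_nonneg fun x => trajP_nonneg hM.1 hμ.1 x).trans
        (sum_trajP hM.2 hμ.2 _).le
    have hstep : ∀ x : Fin (m + 1) → Fin d, (∀ t, x t ∉ B) →
        (1 - c) * trajP M μ x ≤ ∑ y with y ∉ B, trajP M μ (Fin.snoc x y) := by
      intro x hx
      have hout := sum_filter_add_sum_filter_not univ (· ∈ B) (M (x (Fin.last m)))
      rw [hM.2, filter_mem_eq_inter, univ_inter] at hout
      simp only [trajP_snoc, ← mul_sum]
      rw [mul_comm]
      have := hc _ (hx (Fin.last m))
      exact mul_le_mul_of_nonneg_left (by linarith) (trajP_nonneg hM.1 hμ.1 x)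
    calc 1 - ∑ i ∈ B, μ i - ↑(m + 2) * c
        ≤ (1 - c) * ∑ x : Fin (m + 1) → Fin d with ∀ t, x t ∉ B, trajP M μ x := by
          push_cast at ih ⊢; nlinarith
      _ ≤ _ := by
        rw [Fin.sum_filter_forall_pi_snoc (n := m + 1) (· ∉ B), mul_sum]
        exact sum_le_sum fun x hx => hstep x (mem_filter.1 hx).2

end MarkovChain

section BlockChain

variable {k : ℕ} {ε η : ℝ}

-- With 0-indexed states, the outer states `2k + 2a` and `2k + 2a + 1` hang off the inner state `a`.
def cliqueOf (k : ℕ) (i : Fin (6 * k)) : Fin (2 * k) :=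
  ⟨if i.1 < 2 * k then i.1 else (i.1 - 2 * k) / 2, by split_ifs <;> omega⟩

theorem Mblock_row_congr {τ τ' : Fin (2 * k) → ℝ} {i : Fin (6 * k)}
    (h : τ (cliqueOf k i) = τ' (cliqueOf k i)) : Mblock k ε η τ i = Mblock k ε η τ' i := by
  have h' : ∀ n (hn : n < 2 * k), n = (cliqueOf k i).1 → τ ⟨n, hn⟩ = τ' ⟨n, hn⟩ :=
    fun n hn hni => by rwa [show (⟨n, hn⟩ : Fin (2 * k)) = cliqueOf k i from Fin.ext hni]
  ext j
  simp only [cliqueOf] at h'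
  simp only [Mblock, Matrix.of_apply]
  split_ifs <;> simp (disch := split_ifs <;> omega) only [h']

theorem Mblock_isStochastic {τ : Fin (2 * k) → ℝ} (hτ : ∀ a, τ a ∈ Set.Icc (0 : ℝ) 1)
    (hε0 : 0 ≤ ε) (hε : ε ≤ 1 / 4) (hη0 : 0 ≤ η) (hη : η ≤ 3 / 4) :
    IsStochastic (Mblock k ε η τ) := by
  refine ⟨fun i j => ?_, fun i => ?_⟩
  · have hτε : ∀ a, 0 ≤ τ a * ε ∧ τ a * ε ≤ 1 / 4 := fun a => by
      obtain ⟨h0, h1⟩ := hτ a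
      exact ⟨by positivity, by nlinarith⟩
    simp only [Mblock, Matrix.of_apply]
    split_ifs <;> first
      | exact div_nonneg hη0 (by linarith [show (1 : ℝ) ≤ k by norm_cast; omega])
      | linarith [hτε ⟨i.1, by assumption⟩]
      | linarith [hτε ⟨j.1, by assumption⟩]
      | linarith [hτε ⟨(i.1 - 2 * k) / 2, by omega⟩]
  by_cases hi : i.1 < 2 * k
  · have hk : (2 * k - 1 : ℝ) ≠ 0 := by
      have : (1 : ℝ) ≤ k := by norm_cast; omega
      linarith
    have hrow : ∀ j : Fin (6 * k), Mblock k ε η τ i j =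
        (if j.1 < 2 * k then η / (2 * k - 1) else 0)
          + (if j.1 = i.1 then 3 / 4 - η - η / (2 * k - 1) else 0)
          + (if j.1 = 2 * k + 2 * i.1 then (1 + 4 * τ ⟨i, hi⟩ * ε) / 8 else 0)
          + (if j.1 = 2 * k + 2 * i.1 + 1 then (1 - 4 * τ ⟨i, hi⟩ * ε) / 8 else 0) := by
      intro j
      simp only [Mblock, Matrix.of_apply, dif_pos hi]
      split_ifs <;> first | ring1 | omega
    simp only [hrow, sum_add_distrib]
    rw [Fin.sum_ite_val_lt (by omega), Fin.sum_ite_val_eq i.2, Fin.sum_ite_val_eq (by omega),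
      Fin.sum_ite_val_eq (by omega)]
    field_simp
    push_cast
    ring
  · rw [Fintype.sum_eq_add ⟨(i.1 - 2 * k) / 2, by omega⟩ i (Fin.ne_of_val_ne (by simp; omega))]
    · simp only [Mblock, Matrix.of_apply, dif_neg hi]
      split_ifs <;> first | ring1 | omega
    · rintro j ⟨hj1, hj2⟩
      simp only [Mblock, Matrix.of_apply, dif_neg hi]
      simp only [ne_eq, Fin.ext_iff] at hj1 hj2
      split_ifs <;> first | rfl | omega

theorem sum_abs_sub_Mblock_zero (hε : 0 ≤ ε) (τ : Fin (2 * k) → ℝ) (i : Fin (6 * k)) :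
    ∑ j, |Mblock k ε η τ i j - Mblock k ε η (fun _ => 0) i j| = |τ (cliqueOf k i)| * ε := by
  -- Each row of the difference is `±τ ε / 2` at two entries and `0` elsewhere.
  have hpair : ∀ t : ℝ, |t * ε * (1 / 2)| + |t * ε * (-1 / 2)| = ε * |t| := fun t => by
    simp only [abs_mul, abs_of_nonneg hε, abs_div, abs_neg, abs_one, abs_two]; ring
  by_cases hi : i.1 < 2 * k
  · rw [Fintype.sum_eq_add ⟨2 * k + 2 * i.1, by omega⟩ ⟨2 * k + 2 * i.1 + 1, by omega⟩
      (Fin.ne_of_val_ne (by simp))]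
    · simp only [Mblock, Matrix.of_apply, cliqueOf, dif_pos hi, if_pos hi]
      split_ifs <;> first | omega | (generalize τ _ = t; ring_nf; linarith [hpair t])
    · rintro j ⟨hj1, hj2⟩
      simp only [ne_eq, Fin.ext_iff] at hj1 hj2
      simp only [Mblock, Matrix.of_apply, dif_pos hi]
      split_ifs <;> first | omega | simp
  · rw [Fintype.sum_eq_add ⟨(i.1 - 2 * k) / 2, by omega⟩ i (Fin.ne_of_val_ne (by simp; omega))]
    · simp only [Mblock, Matrix.of_apply, cliqueOf, dif_neg hi, if_neg hi]
      split_ifs <;> first | omega | (generalize τ _ = t; ring_nf; linarith [hpair t])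
    · rintro j ⟨hj1, hj2⟩
      simp only [ne_eq, Fin.ext_iff] at hj1 hj2
      simp only [Mblock, Matrix.of_apply, dif_neg hi]
      split_ifs <;> first | omega | simp

theorem iSup_sum_abs_sub_Mblock_indicator (hε : 0 ≤ ε) (a : Fin (2 * k)) :
    ⨆ i, ∑ j, |Mblock k ε η (fun i' => if i' = a then 1 else 0) i j
        - Mblock k ε η (fun _ => 0) i j| = ε := by
  have : Nonempty (Fin (6 * k)) := ⟨⟨a.1, by omega⟩⟩
  simp only [sum_abs_sub_Mblock_zero hε]
  apply le_antisymm
  · exact ciSup_le fun i => by split_ifs <;> simp [hε]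
  · refine le_ciSup_of_le (Set.finite_range _).bddAbove ⟨a.1, by omega⟩ ?_
    simp [cliqueOf]

theorem sum_Mblock_zero_cliqueOf_le (hη : 0 ≤ η) {a : Fin (2 * k)} {i : Fin (6 * k)}
    (hi : cliqueOf k i ≠ a) :
    ∑ j with cliqueOf k j = a, Mblock k ε η (fun _ => 0) i j ≤ η / (2 * k - 1) := by
  have hentry : ∀ j, (if cliqueOf k j = a then Mblock k ε η (fun _ => 0) i j else 0) =
      if j.1 = a.1 then (if i.1 < 2 * k then η / (2 * k - 1) else 0) else 0 := by
    intro j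
    simp only [cliqueOf, ne_eq, Fin.ext_iff] at hi ⊢
    simp only [Mblock, Matrix.of_apply]
    split_ifs at hi ⊢ <;> first | rfl | omega
  rw [sum_filter]
  simp only [hentry]
  rw [Fin.sum_ite_val_eq (by omega)]
  split_ifs with h
  · rfl
  · have : (1 : ℝ) ≤ k := by norm_cast; omega
    exact div_nonneg hη (by linarith)

def cliqueUniform (k : ℕ) (i : Fin (6 * k)) : ℝ :=
  if i.1 < 2 * k then 1 / (2 * (k : ℝ)) else 0

theorem isDist_cliqueUniform (hk : 0 < k) : IsDist (cliqueUniform k) := by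
  refine ⟨fun i => by unfold cliqueUniform; positivity, ?_⟩
  have hk' : (k : ℝ) ≠ 0 := by positivity
  simp only [cliqueUniform]
  rw [Fin.sum_ite_val_lt (by omega)]
  push_cast
  field_simp

theorem sum_cliqueUniform_cliqueOf (a : Fin (2 * k)) :
    ∑ i with cliqueOf k i = a, cliqueUniform k i = 1 / (2 * k) := by
  have hentry : ∀ i, (if cliqueOf k i = a then cliqueUniform k i else 0) =
      if i.1 = a.1 then 1 / (2 * (k : ℝ)) else 0 := by
    intro i
    simp only [cliqueOf, cliqueUniform, Fin.ext_iff]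
    split_ifs <;> first | rfl | omega
  rw [sum_filter]
  simp only [hentry]
  exact Fin.sum_ite_val_eq (by omega) _

end BlockChain

theorem markov_identity_testing_mixing_lower_bound_general
    (k : ℕ) (ε η : ℝ) (hε0 : 0 < ε) (hε : ε ≤ 1 / 8)
    (hη0 : 0 < η) (hη : η < 1 / 48) (istar : Fin (2 * k)) :
    (⨆ i : Fin (6 * k), ∑ j, |Mblock k ε η (fun i' => if i' = istar then 1 else 0) i j
        - Mblock k ε η (fun _ => 0) i j|) = ε ∧
    ∀ m : ℕ, (m : ℝ) ≤ (6 * (k : ℝ)) / (120 * η) →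
      ∀ T : (Fin m → Fin (6 * k)) → ℝ, (∀ x, 0 ≤ T x ∧ T x ≤ 1) →
        1 / 10 ≤
          (∑ x, trajP (Mblock k ε η (fun _ => 0))
              (fun i : Fin (6 * k) => if i.1 < 2 * k then 1 / (2 * (k : ℝ)) else 0) x * T x) +
            ∑ x, trajP (Mblock k ε η (fun i' => if i' = istar then 1 else 0))
              (fun i : Fin (6 * k) => if i.1 < 2 * k then 1 / (2 * (k : ℝ)) else 0) x
                * (1 - T x) := by
  refine ⟨iSup_sum_abs_sub_Mblock_indicator hε0.le istar, fun m hm T hT => ?_⟩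
  have hk : (1 : ℝ) ≤ k := by have := istar.2; norm_cast; omega
  have hstoch : ∀ τ : Fin (2 * k) → ℝ, (∀ a, τ a ∈ Set.Icc (0 : ℝ) 1) →
      IsStochastic (Mblock k ε η τ) := fun τ hτ =>
    Mblock_isStochastic hτ hε0.le (by linarith) hη0.le (by linarith)
  have hM0 := hstoch (fun _ => 0) fun _ => by simp
  have hM1 := hstoch (fun i' => if i' = istar then 1 else 0) fun _ => by split_ifs <;> simp
  have hμ := isDist_cliqueUniform (k := k) (by exact_mod_cast hk)
  have havoid := one_sub_le_sum_trajP_avoid hM0 hμ (B := {i | cliqueOf k i = istar})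
    (div_nonneg hη0.le (by linarith))
    (fun i hi => sum_Mblock_zero_cliqueOf_le hη0.le (by simpa using hi)) m
  rw [sum_cliqueUniform_cliqueOf] at havoid
  refine le_trans ?_ (havoid.trans (sum_le_sum_mul_add_sum_mul_one_sub
    (trajP_nonneg hM0.1 hμ.1) (trajP_nonneg hM1.1 hμ.1) hT fun x hx =>
      trajP_congr_rows fun t => Mblock_row_congr (by simpa using (mem_filter.1 hx).2 t)))
  have hmη : m * η ≤ k / 20 := by
    rw [le_div_iff₀ (by positivity)] at hm
    linarith
  have hdrift : m * (η / (2 * k - 1)) ≤ 1 / 20 := by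
    rw [← mul_div_assoc, div_le_iff₀ (by linarith)]
    linarith
  have hstart : 1 / (2 * (k : ℝ)) ≤ 1 / 2 := by
    rw [div_le_div_iff₀ (by positivity) (by norm_num)]
    linarith
  linarith

/-- Lower bound construction for the `Ω(d·t_mix)` bound: the reference chain
`M_{η,0}` and the alternative `M_{η,τ}` with `τ_i = 1{i = i⋆}` are at distance
`ε`, yet no test of a trajectory of length `m ≤ d/(120η)` can distinguish them
with total error below `1/10`. -/
theorem markov_identity_testing_mixing_lower_bound
    (k : ℕ) (hk : 2 ≤ k) (ε η : ℝ) (hε0 : 0 < ε) (hε : ε ≤ 1 / 8)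
    (hη0 : 0 < η) (hη : η < 1 / 48) (istar : Fin (2 * k)) :
    (⨆ i : Fin (6 * k), ∑ j, |Mblock k ε η (fun i' => if i' = istar then 1 else 0) i j
        - Mblock k ε η (fun _ => 0) i j|) = ε ∧
    ∀ m : ℕ, (m : ℝ) ≤ (6 * (k : ℝ)) / (120 * η) →
      ∀ T : (Fin m → Fin (6 * k)) → ℝ, (∀ x, 0 ≤ T x ∧ T x ≤ 1) →
        1 / 10 ≤
          (∑ x, trajP (Mblock k ε η (fun _ => 0))
              (fun i : Fin (6 * k) => if i.1 < 2 * k then 1 / (2 * (k : ℝ)) else 0) x * T x) +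
            ∑ x, trajP (Mblock k ε η (fun i' => if i' = istar then 1 else 0))
              (fun i : Fin (6 * k) => if i.1 < 2 * k then 1 / (2 * (k : ℝ)) else 0) x
                * (1 - T x) :=
  markov_identity_testing_mixing_lower_bound_general k ε η hε0 hε hη0 hη istar

end
end

section
/- Fix d ≥ 2, 0 < p⋆ ≤ 1/(2(d+1)), and η ∈ Δ_d, and let X₁,…,X_m be a trajectory drawn from (M_η, p). Let N_{d+1} = ∑_{t=1}^m 1{X_t = d+1}. Then P_{M_η,p}(N_{d+1} = n) does not depend on η and equals: (1−p⋆)^m if n = 0; p⋆^n (1−p⋆)^{m−2n} [ C(m−n+1, n) − p⋆·C(m−n, n−1) ] if 1 ≤ n and 2n ≤ m; p⋆^n if 2n = m+1; and 0 if 2n > m+1. -/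
open Finset

noncomputable section

/-- The distribution `p` on `[d+1]`: `p(d+1) = p⋆`, `p(i) = (1-p⋆)/d` for `i ∈ [d]`. -/
def pInit (d : ℕ) (ps : ℝ) : Fin (d + 1) → ℝ :=
  fun i => if i.1 = d then ps else (1 - ps) / d

/-- The chain `M_η ∈ G_{p⋆}`: rows `1,…,d` equal `p`, row `d+1` is `(η(1),…,η(d),0)`. -/
def MG (d : ℕ) (ps : ℝ) (η : Fin d → ℝ) : Matrix (Fin (d + 1)) (Fin (d + 1)) ℝ :=
  Matrix.of fun i j =>
    if i.1 = d then (if h : j.1 = d then 0 else η ⟨j.1, by have h2 := j.2; omega⟩)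
    else pInit d ps j

/-- Number of visits to state `d+1` in a trajectory. -/
def Nlast (d m : ℕ) (x : Fin m → Fin (d + 1)) : ℕ :=
  (Finset.univ.filter (fun t => (x t).1 = d)).card

/-!
Condition on the first state. From a state of `[d]` the chain restarts from `p`; from `d + 1`
it moves to `η`, which lives on `[d]`, so one step later it again restarts from `p`, whatever
`η` is. Hence `g m n`, the probability of `n` visits in `m` steps from `p`, satisfies
`g (m + 1) 0 = (1 - p⋆) g m 0` and
`g (m + 2) (n + 1) = (1 - p⋆) g (m + 1) (n + 1) + p⋆ g m n`, and Pascal's rule shows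
that the closed form satisfies the same recursion.
-/

section Trajectories

variable {D : ℕ} (M : Matrix (Fin D) (Fin D) ℝ) (μ : Fin D → ℝ)

lemma trajP_of_fin_zero (x : Fin 0 → Fin D) : trajP M μ x = 1 := by
  simp [trajP]

lemma trajP_succ_eq {m : ℕ} (x : Fin (m + 1) → Fin D) :
    trajP M μ x = μ (x 0) * ∏ t : Fin m, M (x t.castSucc) (x t.succ) := by
  simp only [trajP, dif_pos m.succ_pos]
  rfl

lemma trajP_cons {m : ℕ} (a : Fin D) (x : Fin m → Fin D) :
    trajP M μ (Fin.cons a x) = μ a * trajP M (M a) x := by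
  cases m with
  | zero => simp [trajP_succ_eq, trajP_of_fin_zero]
  | succ k =>
    rw [trajP_succ_eq, trajP_succ_eq, Fin.prod_univ_succ]
    simp only [Fin.cons_zero, Fin.castSucc_zero, Fin.succ_zero_eq_one, Fin.cons_succ,
      ← Fin.succ_castSucc]
    rfl

end Trajectories

lemma Nlast_cons {d m : ℕ} (a : Fin (d + 1)) (x : Fin m → Fin (d + 1)) :
    Nlast d (m + 1) (Fin.cons a x) = (if a = Fin.last d then 1 else 0) + Nlast d m x := by
  simp only [Nlast, card_filter, Fin.sum_univ_succ, Fin.cons_zero, Fin.cons_succ,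
    Fin.ext_iff, Fin.val_last]

section VisitLaw

variable {d : ℕ} (M : Matrix (Fin (d + 1)) (Fin (d + 1)) ℝ)

def visitLaw (μ : Fin (d + 1) → ℝ) (m n : ℕ) : ℝ :=
  ∑ x ∈ univ.filter (fun x : Fin m → Fin (d + 1) => Nlast d m x = n), trajP M μ x

lemma visitLaw_zero (μ : Fin (d + 1) → ℝ) (n : ℕ) :
    visitLaw M μ 0 n = if n = 0 then 1 else 0 := by
  split_ifs <;> simp_all [visitLaw, Nlast, trajP_of_fin_zero, eq_comm]

lemma visitLaw_succ (μ : Fin (d + 1) → ℝ) (m n : ℕ) :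
    visitLaw M μ (m + 1) n =
      ∑ i : Fin d, μ i.castSucc * visitLaw M (M i.castSucc) m n +
        μ (Fin.last d) * if n = 0 then 0 else visitLaw M (M (Fin.last d)) m (n - 1) := by
  have first_step : visitLaw M μ (m + 1) n = ∑ a, ∑ x : Fin m → Fin (d + 1),
      if (if a = Fin.last d then 1 else 0) + Nlast d m x = n then μ a * trajP M (M a) x
      else 0 := by
    rw [visitLaw, sum_filter, ← (Fin.consEquiv fun _ => Fin (d + 1)).sum_comp,
      Fintype.sum_prod_type]
    simp only [Fin.consEquiv, Equiv.coe_fn_mk, Nlast_cons, trajP_cons]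
  rw [first_step, Fin.sum_univ_castSucc]
  congr 1
  · refine sum_congr rfl fun i _ => ?_
    simp only [Fin.castSucc_ne_last, if_false, zero_add, visitLaw, mul_sum, sum_filter,
      mul_ite, mul_zero]
  · rcases n with _ | n
    · simp
    · simp [visitLaw, mul_sum, sum_filter, add_comm 1]

end VisitLaw

section MG

variable {d : ℕ} (ps : ℝ) (η : Fin d → ℝ)

lemma pInit_castSucc (i : Fin d) : pInit d ps i.castSucc = (1 - ps) / d :=
  if_neg i.2.ne

lemma pInit_last : pInit d ps (Fin.last d) = ps :=
  if_pos rfl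

lemma sum_pInit_castSucc (hd : d ≠ 0) : ∑ i : Fin d, pInit d ps i.castSucc = 1 - ps := by
  simp only [pInit_castSucc, sum_const, card_univ, Fintype.card_fin, nsmul_eq_mul]
  field_simp

lemma MG_castSucc (i : Fin d) : MG d ps η i.castSucc = pInit d ps :=
  funext fun _ => if_neg i.2.ne

lemma MG_last_castSucc (i : Fin d) : MG d ps η (Fin.last d) i.castSucc = η i :=
  (if_pos rfl).trans (dif_neg i.2.ne)

lemma MG_last_last : MG d ps η (Fin.last d) (Fin.last d) = 0 :=
  (if_pos rfl).trans (dif_pos rfl)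

lemma visitLaw_MG_succ (μ : Fin (d + 1) → ℝ) (m n : ℕ) :
    visitLaw (MG d ps η) μ (m + 1) n =
      (∑ i : Fin d, μ i.castSucc) * visitLaw (MG d ps η) (pInit d ps) m n +
        μ (Fin.last d) *
          if n = 0 then 0 else visitLaw (MG d ps η) (MG d ps η (Fin.last d)) m (n - 1) := by
  simp only [visitLaw_succ, MG_castSucc, sum_mul]

lemma visitLaw_MG_last_succ (hη : ∑ i, η i = 1) (m n : ℕ) :
    visitLaw (MG d ps η) (MG d ps η (Fin.last d)) (m + 1) n =
      visitLaw (MG d ps η) (pInit d ps) m n := by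
  simp only [visitLaw_succ, MG_last_castSucc, MG_castSucc, MG_last_last, zero_mul, add_zero,
    ← sum_mul, hη, one_mul]

end MG

section ClosedForm

variable (ps : ℝ)

def visitLawFormula (m n : ℕ) : ℝ :=
  if n = 0 then (1 - ps) ^ m
  else if 2 * n ≤ m then
    ps ^ n * (1 - ps) ^ (m - 2 * n) *
      (((m - n + 1).choose n : ℝ) - ps * ((m - n).choose (n - 1) : ℝ))
  else if 2 * n = m + 1 then ps ^ n
  else 0

/-- `C(a, n - 1)` with the convention `C(a, -1) = 0`, which `Nat.choose` with truncated
subtraction does not follow. -/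
def choosePred (a n : ℕ) : ℝ := if n = 0 then 0 else (a.choose (n - 1) : ℝ)

lemma choosePred_succ (a n : ℕ) : choosePred a (n + 1) = a.choose n := by
  simp [choosePred]

lemma choosePred_self (n : ℕ) : choosePred n n = n := by
  cases n <;> simp [choosePred, Nat.choose_succ_self_right]

lemma cast_choose_succ_left (a k : ℕ) :
    ((a + 1).choose k : ℝ) = a.choose k + choosePred a k := by
  cases k <;> simp [choosePred, Nat.choose_succ_succ', add_comm]

lemma visitLawFormula_of_two_mul_le {m n k a : ℕ} (h : 2 * n ≤ m) (hk : m - 2 * n = k)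
    (ha : m - n = a) :
    visitLawFormula ps m n =
      ps ^ n * (1 - ps) ^ k * ((a + 1).choose n - ps * choosePred a n) := by
  subst hk ha
  cases n <;> simp [visitLawFormula, choosePred, h]

lemma visitLawFormula_of_two_mul_eq {m n : ℕ} (h : 2 * n = m + 1) :
    visitLawFormula ps m n = ps ^ n := by
  rw [visitLawFormula, if_neg (by omega), if_neg (by omega), if_pos h]

lemma visitLawFormula_of_lt_two_mul {m n : ℕ} (h : m + 1 < 2 * n) :
    visitLawFormula ps m n = 0 := by
  rw [visitLawFormula, if_neg (by omega), if_neg (by omega), if_neg (by omega)]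

lemma visitLawFormula_succ_zero (m : ℕ) :
    visitLawFormula ps (m + 1) 0 = (1 - ps) * visitLawFormula ps m 0 := by
  simp [visitLawFormula, pow_succ']

lemma visitLawFormula_add_two_succ (m n : ℕ) :
    visitLawFormula ps (m + 2) (n + 1) =
      (1 - ps) * visitLawFormula ps (m + 1) (n + 1) + ps * visitLawFormula ps m n := by
  rcases lt_trichotomy (2 * n) m with h | rfl | h
  · obtain ⟨j, rfl⟩ : ∃ j, m = 2 * n + j + 1 := ⟨m - 2 * n - 1, by omega⟩
    rw [visitLawFormula_of_two_mul_le ps (k := j + 1) (a := n + j + 1 + 1) (by omega)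
        (by omega) (by omega),
      visitLawFormula_of_two_mul_le ps (k := j) (a := n + j + 1) (by omega) (by omega)
        (by omega),
      visitLawFormula_of_two_mul_le ps (k := j + 1) (a := n + j + 1) (by omega) (by omega)
        (by omega),
      cast_choose_succ_left (n + j + 1 + 1), choosePred_succ, choosePred_succ,
      cast_choose_succ_left (n + j + 1) n]
    ring
  · rw [visitLawFormula_of_two_mul_le ps (k := 0) (a := n + 1) (by omega) (by omega) (by omega),
      visitLawFormula_of_two_mul_eq ps (by omega),
      visitLawFormula_of_two_mul_le ps (k := 0) (a := n) le_rfl (by omega) (by omega),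
      choosePred_succ, choosePred_self, Nat.choose_succ_self_right, Nat.choose_succ_self_right]
    push_cast
    ring
  · rcases eq_or_ne (m + 1) (2 * n) with h' | h'
    · rw [visitLawFormula_of_two_mul_eq ps (by omega),
        visitLawFormula_of_lt_two_mul ps (by omega), visitLawFormula_of_two_mul_eq ps h'.symm]
      ring
    · rw [visitLawFormula_of_lt_two_mul ps (show m + 2 + 1 < 2 * (n + 1) by omega),
        visitLawFormula_of_lt_two_mul ps (show m + 1 + 1 < 2 * (n + 1) by omega),
        visitLawFormula_of_lt_two_mul ps (show m + 1 < 2 * n by omega)]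
      ring

end ClosedForm

theorem visitLaw_MG_pInit {d : ℕ} (hd : d ≠ 0) (ps : ℝ) {η : Fin d → ℝ}
    (hη : ∑ i, η i = 1) (m n : ℕ) :
    visitLaw (MG d ps η) (pInit d ps) m n = visitLawFormula ps m n := by
  induction m using Nat.twoStepInduction generalizing n with
  | zero => cases n <;> simp [visitLaw_zero, visitLawFormula]
  | one =>
    rcases n with _ | _ | n
    · simp [visitLaw_MG_succ, sum_pInit_castSucc ps hd, visitLaw_zero, visitLawFormula]
    · simp [visitLaw_MG_succ, pInit_last, visitLaw_zero, visitLawFormula_of_two_mul_eq]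
    · simp [visitLaw_MG_succ, visitLaw_zero,
        visitLawFormula_of_lt_two_mul ps (show 1 + 1 < 2 * (n + 2) by omega)]
  | more m ih ih' =>
    rcases n with _ | n
    · rw [visitLaw_MG_succ, sum_pInit_castSucc ps hd, ih', visitLawFormula_succ_zero ps (m + 1)]
      simp
    · rw [visitLaw_MG_succ, sum_pInit_castSucc ps hd, pInit_last, if_neg n.succ_ne_zero,
        Nat.add_sub_cancel, visitLaw_MG_last_succ ps η hη, ih', ih,
        visitLawFormula_add_two_succ]

theorem visits_to_last_state_law_general
    (d m : ℕ) (ps : ℝ)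
    (η : Fin d → ℝ) (hη : IsDist η) (n : ℕ) :
    (∑ x ∈ Finset.univ.filter (fun x : Fin m → Fin (d + 1) => Nlast d m x = n),
        trajP (MG d ps η) (pInit d ps) x) =
      if n = 0 then (1 - ps) ^ m
      else if 2 * n ≤ m then
        ps ^ n * (1 - ps) ^ (m - 2 * n) *
          (((m - n + 1).choose n : ℝ) - ps * ((m - n).choose (n - 1) : ℝ))
      else if 2 * n = m + 1 then ps ^ n
      else 0 := by
  have hd : d ≠ 0 := by
    rintro rfl
    simp [IsDist] at hη
  exact visitLaw_MG_pInit hd ps hη.2 m n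

/-- Exact law of the number of visits to state `d+1` for a chain `M_η ∈ G_{p⋆}`
started from `p`; in particular it does not depend on `η`. -/
theorem visits_to_last_state_law
    (d m : ℕ) (hd : 2 ≤ d) (ps : ℝ) (hps : 0 < ps) (hps2 : ps ≤ 1 / (2 * ((d : ℝ) + 1)))
    (η : Fin d → ℝ) (hη : IsDist η) (n : ℕ) :
    (∑ x ∈ Finset.univ.filter (fun x : Fin m → Fin (d + 1) => Nlast d m x = n),
        trajP (MG d ps η) (pInit d ps) x) =
      if n = 0 then (1 - ps) ^ m
      else if 2 * n ≤ m then
        ps ^ n * (1 - ps) ^ (m - 2 * n) *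
          (((m - n + 1).choose n : ℝ) - ps * ((m - n).choose (n - 1) : ℝ))
      else if 2 * n = m + 1 then ps ^ n
      else 0 :=
  visits_to_last_state_law_general d m ps η hη n

end
end
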